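/- For discrete incremental voting on a connected finite graph with initial opinions in {1,...,k}, the expected time to reach consensus is at most (k−1)·T_{2-vote} = O(k·T_{2-vote}), where T_{2-vote} is the worst-case expected consensus time of standard two-opinion pull voting (of the corresponding variant) on the same graph. -/

import Mathlib

/-!
STATEMENT 6: For discrete incremental voting on a connected finite graph with initial
opinions in `{1,...,k}`, the expected time to reach consensus is at most
`(k−1)·T_{2-vote}`, where `T_{2-vote}` is the worst-case expected consensus time of
standard two-opinion pull voting (of the corresponding variant) on the same graph.

Expected times are expressed via `E[τ] = ∑_{t≥0} P(τ > t)`, using that the consensus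
states are absorbing for both processes.
-/

namespace IncrementalVoting6

/-- The incremental voting update rule. -/
def updateRule (a b : ℤ) : ℤ := if a < b then a + 1 else if b < a then a - 1 else a

/-- The three variants of the process. -/
inductive ProcKind | edge | vertexAsync | vertexSync

variable {V : Type} [Fintype V] [DecidableEq V] [Nonempty V]

/-- The space of random choices driving one step of each process variant. -/
def Drive (G : SimpleGraph V) [DecidableRel G.Adj] : ProcKind → Type
  | ProcKind.edge => G.Dart
  | ProcKind.vertexAsync => V × (Π v : V, G.neighborFinset v)
  | ProcKind.vertexSync => Π v : V, G.neighborFinset v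

instance (G : SimpleGraph V) [DecidableRel G.Adj] : ∀ pk : ProcKind, Fintype (Drive G pk)
  | ProcKind.edge => by unfold Drive; infer_instance
  | ProcKind.vertexAsync => by unfold Drive; infer_instance
  | ProcKind.vertexSync => by unfold Drive; infer_instance

/-- The uniform distribution of the random choices driving one step. -/
noncomputable def drivePMF (G : SimpleGraph V) [DecidableRel G.Adj]
    (hdeg : ∀ v, 0 < G.degree v) : ∀ pk : ProcKind, PMF (Drive G pk)
  | ProcKind.edge =>
      haveI : Nonempty G.Dart := by
        obtain ⟨v⟩ := ‹Nonempty V›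
        obtain ⟨w, hw⟩ := Finset.card_pos.mp (hdeg v)
        exact ⟨⟨(v, w), (SimpleGraph.mem_neighborFinset G v w).mp hw⟩⟩
      PMF.uniformOfFintype G.Dart
  | ProcKind.vertexAsync =>
      haveI : ∀ v : V, Nonempty (G.neighborFinset v) :=
        fun v => (Finset.card_pos.mp (hdeg v)).to_subtype
      PMF.uniformOfFintype (V × (Π v : V, G.neighborFinset v))
  | ProcKind.vertexSync =>
      haveI : ∀ v : V, Nonempty (G.neighborFinset v) :=
        fun v => (Finset.card_pos.mp (hdeg v)).to_subtype
      PMF.uniformOfFintype (Π v : V, G.neighborFinset v)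

/-- The effect of one incremental voting step on the configuration `x`. -/
def applyDrive (G : SimpleGraph V) [DecidableRel G.Adj] (x : V → ℤ) :
    ∀ pk : ProcKind, Drive G pk → (V → ℤ)
  | ProcKind.edge => fun d =>
      Function.update x d.toProd.1 (updateRule (x d.toProd.1) (x d.toProd.2))
  | ProcKind.vertexAsync => fun vc =>
      Function.update x vc.1 (updateRule (x vc.1) (x (vc.2 vc.1)))
  | ProcKind.vertexSync => fun c => fun v => updateRule (x v) (x (c v))

/-- The effect of one standard (two-opinion) pull-voting step on the configuration `y`:
the updating vertex adopts the observed neighbour's opinion. -/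
def applyDrivePV (G : SimpleGraph V) [DecidableRel G.Adj] (y : V → Bool) :
    ∀ pk : ProcKind, Drive G pk → (V → Bool)
  | ProcKind.edge => fun d => Function.update y d.toProd.1 (y d.toProd.2)
  | ProcKind.vertexAsync => fun vc => Function.update y vc.1 (y (vc.2 vc.1))
  | ProcKind.vertexSync => fun c => fun v => y (c v)

/-- The distribution of the incremental voting configuration after `t` steps. -/
noncomputable def dist (G : SimpleGraph V) [DecidableRel G.Adj]
    (hdeg : ∀ v, 0 < G.degree v) (pk : ProcKind) (x0 : V → ℤ) : ℕ → PMF (V → ℤ)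
  | 0 => PMF.pure x0
  | t + 1 => (dist G hdeg pk x0 t).bind
      (fun x => (drivePMF G hdeg pk).map (fun d => applyDrive G x pk d))

/-- The distribution of the two-opinion pull-voting configuration after `t` steps. -/
noncomputable def distPV (G : SimpleGraph V) [DecidableRel G.Adj]
    (hdeg : ∀ v, 0 < G.degree v) (pk : ProcKind) (y0 : V → Bool) : ℕ → PMF (V → Bool)
  | 0 => PMF.pure y0
  | t + 1 => (distPV G hdeg pk y0 t).bind
      (fun y => (drivePMF G hdeg pk).map (fun d => applyDrivePV G y pk d))

/-- The probability of an event under a probability mass function (in `ℝ≥0∞`). -/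
noncomputable def probE {α : Type*} (p : PMF α) (A : Set α) : ENNReal :=
  ∑' a, A.indicator p a

/-- The expected number of steps until one of the two extreme opinions `ℓ`, `r` of the
initial configuration `x0` is eliminated, via `E[τ] = ∑_{t≥0} P(τ > t)`. -/
noncomputable def elimTime (G : SimpleGraph V) [DecidableRel G.Adj]
    (hdeg : ∀ v, 0 < G.degree v) (pk : ProcKind) (x0 : V → ℤ) (ℓ r : ℤ) : ENNReal :=
  ∑' t : ℕ, probE (dist G hdeg pk x0 t) {x | (∃ v, x v = ℓ) ∧ (∃ v, x v = r)}

/-- The expected consensus time of two-opinion pull voting started from `y0`. -/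
noncomputable def consTimePV (G : SimpleGraph V) [DecidableRel G.Adj]
    (hdeg : ∀ v, 0 < G.degree v) (pk : ProcKind) (y0 : V → Bool) : ENNReal :=
  ∑' t : ℕ, probE (distPV G hdeg pk y0 t) {y | ¬ ∃ b : Bool, ∀ v, y v = b}

/-- The expected consensus time of incremental voting started from `x0`. -/
noncomputable def consTimeInc (G : SimpleGraph V) [DecidableRel G.Adj]
    (hdeg : ∀ v, 0 < G.degree v) (pk : ProcKind) (x0 : V → ℤ) : ENNReal :=
  ∑' t : ℕ, probE (dist G hdeg pk x0 t) {x | ¬ ∃ j : ℤ, ∀ v, x v = j}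

/-!
Before consensus the spread `max x - min x` of the opinions lies in `{1, …, k-1}`, so the
consensus time is at most the sum over `j` of the expected time spent at spread `j`.
Started at spread `j`, with extremes `l < r`, couple incremental voting with pull voting
driven by the same random choices and started from `y v = (l < x v)`. Since incremental
opinions move by one step towards the observed one, `y v = true` keeps `x v > l` and
`y v = false` keeps `x v < r`; so while the spread is still `j`, i.e. both `l` and `r` are
present, pull voting has not reached consensus. Hence the time spent at spread `j` is at
most `T_{2-vote}` from such a start, and by the strong Markov property at the first visit
to spread `j`, from any start.
-/

open scoped ENNReal

lemma probE_eq_toOuterMeasure {α : Type*} (p : PMF α) (A : Set α) :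
    probE p A = p.toOuterMeasure A :=
  (p.toOuterMeasure_apply A).symm

section Chain

variable {α β : Type*}

noncomputable def chain (κ : α → PMF α) (a : α) : ℕ → PMF α
  | 0 => PMF.pure a
  | t + 1 => (chain κ a t).bind κ

lemma chain_succ' (κ : α → PMF α) (a : α) (t : ℕ) :
    chain κ a (t + 1) = (κ a).bind (chain κ · t) := by
  induction t generalizing a with
  | zero => simp [chain]
  | succ t ih => rw [chain, ih, PMF.bind_bind]; rfl

lemma forall_mem_support_chain {κ : α → PMF α} {P : α → Prop}
    (hκ : ∀ a, P a → ∀ b ∈ (κ a).support, P b) {a : α} (ha : P a) (t : ℕ) :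
    ∀ b ∈ (chain κ a t).support, P b := by
  induction t with
  | zero => simpa [chain] using ha
  | succ t ih =>
    simp only [chain, PMF.mem_support_bind_iff]
    rintro b ⟨c, hc, hb⟩
    exact hκ c (ih c hc) b hb

lemma chain_map {κ : α → PMF α} {κ' : β → PMF β} {f : α → β}
    (hf : ∀ a, (κ a).map f = κ' (f a)) (a : α) (t : ℕ) :
    (chain κ a t).map f = chain κ' (f a) t := by
  induction t with
  | zero => exact PMF.pure_map _ _
  | succ t ih =>
    rw [chain, chain, PMF.map_bind, ← ih, PMF.bind_map]
    simp only [Function.comp_def, hf]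

noncomputable def occupation (κ : α → PMF α) (A : Set α) (a : α) : ℝ≥0∞ :=
  ∑' t, (chain κ a t).toOuterMeasure A

/-- A strong Markov property: the chain spends no time in `A` before its first visit. -/
lemma occupation_le_of_forall_mem {κ : α → PMF α} {A : Set α} {M : ℝ≥0∞}
    (hA : ∀ a ∈ A, occupation κ A a ≤ M) (a : α) : occupation κ A a ≤ M := by
  suffices h : ∀ T a, ∑ t ∈ Finset.range T, (chain κ a t).toOuterMeasure A ≤ M by
    exact ENNReal.tsum_le_of_sum_range_le (h · a)
  intro T
  induction T with
  | zero => simp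
  | succ T ih =>
    intro a
    by_cases ha : a ∈ A
    · exact (ENNReal.sum_le_tsum _).trans (hA a ha)
    · calc ∑ t ∈ Finset.range (T + 1), (chain κ a t).toOuterMeasure A
          = ∑' b, κ a b * ∑ t ∈ Finset.range T, (chain κ b t).toOuterMeasure A := by
            simp only [Finset.sum_range_succ', chain_succ', PMF.toOuterMeasure_bind_apply,
              Finset.mul_sum]
            rw [Summable.tsum_finsetSum fun _ _ => ENNReal.summable]
            simp [chain, ha]
        _ ≤ ∑' b, κ a b * M := by gcongr with b; exact ih b
        _ = M := by rw [ENNReal.tsum_mul_right, PMF.tsum_coe, one_mul]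

end Chain

lemma updateRule_self (a : ℤ) : updateRule a a = a := by
  simp [updateRule]

lemma updateRule_mem_Icc {l r a b : ℤ} (ha : a ∈ Set.Icc l r) (hb : b ∈ Set.Icc l r) :
    updateRule a b ∈ Set.Icc l r := by
  simp only [Set.mem_Icc, updateRule] at *
  split_ifs <;> omega

lemma lt_updateRule {l a b : ℤ} (ha : l ≤ a) (hb : l < b) : l < updateRule a b := by
  unfold updateRule; split_ifs <;> omega

lemma updateRule_lt {r a b : ℤ} (ha : a ≤ r) (hb : b < r) : updateRule a b < r := by
  unfold updateRule; split_ifs <;> omega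

section Observation

variable {V : Type} [Fintype V] [DecidableEq V] (G : SimpleGraph V) [DecidableRel G.Adj]

/-- A vertex that does not update is taken to observe itself (`updateRule a a = a`). -/
lemma exists_observed_vertex (pk : ProcKind) (d : Drive G pk) (v : V) :
    ∃ w, (∀ x, applyDrive G x pk d v = updateRule (x v) (x w)) ∧
      ∀ y, applyDrivePV G y pk d v = y w := by
  cases pk with
  | edge =>
    by_cases hv : v = d.toProd.1
    · subst hv
      exact ⟨d.toProd.2, by simp [applyDrive], by simp [applyDrivePV]⟩
    · exact ⟨v, by simp [applyDrive, hv, updateRule_self], by simp [applyDrivePV, hv]⟩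
  | vertexAsync =>
    by_cases hv : v = d.1
    · subst hv
      exact ⟨d.2 d.1, by simp [applyDrive], by simp [applyDrivePV]⟩
    · exact ⟨v, by simp [applyDrive, hv, updateRule_self], by simp [applyDrivePV, hv]⟩
  | vertexSync => exact ⟨d v, fun _ => rfl, fun _ => rfl⟩

end Observation

section Processes

variable (G : SimpleGraph V) [DecidableRel G.Adj] (hdeg : ∀ v, 0 < G.degree v) (pk : ProcKind)

noncomputable def incStep (x : V → ℤ) : PMF (V → ℤ) :=
  (drivePMF G hdeg pk).map (applyDrive G x pk)

noncomputable def pullStep (y : V → Bool) : PMF (V → Bool) :=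
  (drivePMF G hdeg pk).map (applyDrivePV G y pk)

noncomputable def coupledStep (p : (V → ℤ) × (V → Bool)) : PMF ((V → ℤ) × (V → Bool)) :=
  (drivePMF G hdeg pk).map fun d => (applyDrive G p.1 pk d, applyDrivePV G p.2 pk d)

lemma dist_eq_chain (x0 : V → ℤ) (t : ℕ) :
    dist G hdeg pk x0 t = chain (incStep G hdeg pk) x0 t := by
  induction t with
  | zero => rfl
  | succ t ih => rw [dist, ih]; rfl

lemma distPV_eq_chain (y0 : V → Bool) (t : ℕ) :
    distPV G hdeg pk y0 t = chain (pullStep G hdeg pk) y0 t := by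
  induction t with
  | zero => rfl
  | succ t ih => rw [distPV, ih]; rfl

lemma coupledStep_map_fst (p : (V → ℤ) × (V → Bool)) :
    (coupledStep G hdeg pk p).map Prod.fst = incStep G hdeg pk p.1 := by
  rw [coupledStep, PMF.map_comp]; rfl

lemma coupledStep_map_snd (p : (V → ℤ) × (V → Bool)) :
    (coupledStep G hdeg pk p).map Prod.snd = pullStep G hdeg pk p.2 := by
  rw [coupledStep, PMF.map_comp]; rfl

lemma mem_Icc_of_mem_support_chain_incStep {x0 : V → ℤ} {l r : ℤ}
    (h0 : ∀ v, x0 v ∈ Set.Icc l r) (t : ℕ) :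
    ∀ x ∈ (chain (incStep G hdeg pk) x0 t).support, ∀ v, x v ∈ Set.Icc l r := by
  refine forall_mem_support_chain (fun x hx x' hx' v => ?_) h0 t
  obtain ⟨d, -, rfl⟩ := (PMF.mem_support_map_iff _ _ _).1 hx'
  obtain ⟨w, hw, -⟩ := exists_observed_vertex G pk d v
  exact hw x ▸ updateRule_mem_Icc (hx v) (hx w)

end Processes

section Spread

variable {V : Type} [Fintype V] [Nonempty V]

noncomputable def minOpinion (x : V → ℤ) : ℤ := Finset.univ.inf' Finset.univ_nonempty x

noncomputable def maxOpinion (x : V → ℤ) : ℤ := Finset.univ.sup' Finset.univ_nonempty x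

noncomputable def spread (x : V → ℤ) : ℤ := maxOpinion x - minOpinion x

lemma minOpinion_le (x : V → ℤ) (v : V) : minOpinion x ≤ x v :=
  Finset.inf'_le _ (Finset.mem_univ v)

lemma le_maxOpinion (x : V → ℤ) (v : V) : x v ≤ maxOpinion x :=
  Finset.le_sup' _ (Finset.mem_univ v)

lemma exists_eq_minOpinion (x : V → ℤ) : ∃ v, x v = minOpinion x := by
  obtain ⟨v, -, hv⟩ := Finset.exists_mem_eq_inf' (Finset.univ_nonempty (α := V)) x
  exact ⟨v, hv.symm⟩

lemma exists_eq_maxOpinion (x : V → ℤ) : ∃ v, x v = maxOpinion x := by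
  obtain ⟨v, -, hv⟩ := Finset.exists_mem_eq_sup' (Finset.univ_nonempty (α := V)) x
  exact ⟨v, hv.symm⟩

lemma le_minOpinion_and_maxOpinion_le {x : V → ℤ} {l r : ℤ} (h : ∀ v, x v ∈ Set.Icc l r) :
    l ≤ minOpinion x ∧ maxOpinion x ≤ r :=
  ⟨Finset.le_inf' _ _ fun v _ => (h v).1, Finset.sup'_le _ _ fun v _ => (h v).2⟩

lemma exists_spread_eq_of_not_consensus {x : V → ℤ} {k : ℕ}
    (hx : ∀ v, x v ∈ Set.Icc 1 (k : ℤ)) (hne : ¬ ∃ j : ℤ, ∀ v, x v = j) :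
    ∃ j ∈ Finset.Icc 1 (k - 1), spread x = j := by
  have hlt : minOpinion x < maxOpinion x := by
    by_contra! hle
    exact hne ⟨minOpinion x, fun v =>
      ((le_maxOpinion x v).trans hle).antisymm (minOpinion_le x v)⟩
  obtain ⟨hl, hr⟩ := le_minOpinion_and_maxOpinion_le hx
  refine ⟨(spread x).toNat, Finset.mem_Icc.2 ⟨?_, ?_⟩, ?_⟩ <;> unfold spread <;> omega

/-- The invariant of the coupling, where `l < r` are the initial extreme opinions. -/
def Coupled (l r : ℤ) (x : V → ℤ) (y : V → Bool) : Prop :=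
  ∀ v, x v ∈ Set.Icc l r ∧ (y v = true → l < x v) ∧ (y v = false → x v < r)

lemma Coupled.not_consensus {l r : ℤ} {x : V → ℤ} {y : V → Bool} (h : Coupled l r x y)
    (hx : spread x = r - l) : ¬ ∃ b : Bool, ∀ v, y v = b := by
  obtain ⟨hl, hr⟩ := le_minOpinion_and_maxOpinion_le fun v => (h v).1
  obtain ⟨u, hu⟩ := exists_eq_minOpinion x
  obtain ⟨w, hw⟩ := exists_eq_maxOpinion x
  unfold spread at hx
  rintro ⟨b, hb⟩
  cases b
  · have := (h w).2.2 (hb w); omega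
  · have := (h u).2.1 (hb u); omega

end Spread

section Coupling

variable (G : SimpleGraph V) [DecidableRel G.Adj] (hdeg : ∀ v, 0 < G.degree v) (pk : ProcKind)

lemma Coupled.of_mem_support_coupledStep {l r : ℤ} {p q : (V → ℤ) × (V → Bool)}
    (hp : Coupled l r p.1 p.2) (hq : q ∈ (coupledStep G hdeg pk p).support) :
    Coupled l r q.1 q.2 := by
  obtain ⟨d, -, rfl⟩ := (PMF.mem_support_map_iff _ _ _).1 hq
  intro v
  obtain ⟨w, hx, hy⟩ := exists_observed_vertex G pk d v
  obtain ⟨hxv, -, -⟩ := hp v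
  obtain ⟨hxw, htrue, hfalse⟩ := hp w
  dsimp only
  rw [hx, hy]
  exact ⟨updateRule_mem_Icc hxv hxw, fun ht => lt_updateRule hxv.1 (htrue ht),
    fun hf => updateRule_lt hxv.2 (hfalse hf)⟩

lemma occupation_spread_le_consTimePV (x : V → ℤ) (hx : minOpinion x < maxOpinion x) :
    occupation (incStep G hdeg pk) {z | spread z = spread x} x ≤
      consTimePV G hdeg pk (fun v => decide (minOpinion x < x v)) := by
  set y := fun v => decide (minOpinion x < x v)
  have h0 : Coupled (minOpinion x) (maxOpinion x) x y := fun v =>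
    ⟨⟨minOpinion_le x v, le_maxOpinion x v⟩, fun ht => of_decide_eq_true ht,
      fun hf => (not_lt.1 (of_decide_eq_false hf)).trans_lt hx⟩
  refine ENNReal.tsum_le_tsum fun t => ?_
  have hfst : (chain (coupledStep G hdeg pk) (x, y) t).map Prod.fst =
      chain (incStep G hdeg pk) x t := chain_map (coupledStep_map_fst G hdeg pk) _ t
  have hsnd : (chain (coupledStep G hdeg pk) (x, y) t).map Prod.snd =
      chain (pullStep G hdeg pk) y t := chain_map (coupledStep_map_snd G hdeg pk) _ t
  rw [probE_eq_toOuterMeasure, distPV_eq_chain, ← hfst, ← hsnd,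
    PMF.toOuterMeasure_map_apply, PMF.toOuterMeasure_map_apply]
  refine PMF.toOuterMeasure_mono _ fun p ⟨hp, hsupp⟩ => ?_
  have hcoupled := forall_mem_support_chain
    (P := fun p => Coupled _ _ p.1 p.2)
    (fun _ hp _ hq => hp.of_mem_support_coupledStep G hdeg pk hq) h0 t p hsupp
  exact hcoupled.not_consensus hp

lemma occupation_spread_le {j : ℤ} (hj : 0 < j) (x : V → ℤ) :
    occupation (incStep G hdeg pk) {z | spread z = j} x ≤
      ⨆ y0 : V → Bool, consTimePV G hdeg pk y0 := by
  refine occupation_le_of_forall_mem (fun a (ha : spread a = j) => ?_) x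
  subst ha
  exact (occupation_spread_le_consTimePV G hdeg pk a (by unfold spread at hj; omega)).trans
    (le_iSup _ _)

end Coupling

theorem consensus_time_le_k_times_pull_voting_time_general
    (G : SimpleGraph V) [DecidableRel G.Adj]
    (hdeg : ∀ v, 0 < G.degree v) (pk : ProcKind)
    (k : ℕ) (x0 : V → ℤ) (hx0 : ∀ v, x0 v ∈ Finset.Icc (1 : ℤ) (k : ℤ)) :
    consTimeInc G hdeg pk x0 ≤
      ((k - 1 : ℕ) : ENNReal) * ⨆ y0 : V → Bool, consTimePV G hdeg pk y0 := by
  set A : ℕ → Set (V → ℤ) := fun j => {z | spread z = j}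
  have hsplit : ∀ t, probE (dist G hdeg pk x0 t) {x | ¬ ∃ j : ℤ, ∀ v, x v = j} ≤
      ∑ j ∈ Finset.Icc 1 (k - 1), (chain (incStep G hdeg pk) x0 t).toOuterMeasure (A j) := by
    intro t
    rw [probE_eq_toOuterMeasure, dist_eq_chain]
    refine (PMF.toOuterMeasure_mono _ fun z ⟨hz, hsupp⟩ => ?_).trans
      (MeasureTheory.measure_biUnion_finset_le _ _)
    have hzk := mem_Icc_of_mem_support_chain_incStep G hdeg pk
      (fun v => Finset.mem_Icc.1 (hx0 v)) t z hsupp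
    obtain ⟨j, hj, hzj⟩ := exists_spread_eq_of_not_consensus hzk hz
    exact Set.mem_biUnion hj hzj
  calc consTimeInc G hdeg pk x0
      ≤ ∑' t, ∑ j ∈ Finset.Icc 1 (k - 1),
          (chain (incStep G hdeg pk) x0 t).toOuterMeasure (A j) := ENNReal.tsum_le_tsum hsplit
    _ = ∑ j ∈ Finset.Icc 1 (k - 1), occupation (incStep G hdeg pk) (A j) x0 :=
        Summable.tsum_finsetSum fun _ _ => ENNReal.summable
    _ ≤ ∑ _j ∈ Finset.Icc 1 (k - 1), ⨆ y0 : V → Bool, consTimePV G hdeg pk y0 :=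
        Finset.sum_le_sum fun j hj =>
          occupation_spread_le G hdeg pk (by have := (Finset.mem_Icc.1 hj).1; omega) x0
    _ = ((k - 1 : ℕ) : ENNReal) * ⨆ y0 : V → Bool, consTimePV G hdeg pk y0 := by
        simp

/-- **The expected consensus time of discrete incremental voting with opinions in
`{1,...,k}` is at most `(k−1)` times the worst-case expected consensus time of
two-opinion pull voting** (for each of the three variants on a connected finite
graph); in particular it is `O(k·T_{2-vote})`. -/
theorem consensus_time_le_k_times_pull_voting_time
    (G : SimpleGraph V) [DecidableRel G.Adj] (hconn : G.Connected)
    (hdeg : ∀ v, 0 < G.degree v) (pk : ProcKind)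
    (k : ℕ) (x0 : V → ℤ) (hx0 : ∀ v, x0 v ∈ Finset.Icc (1 : ℤ) (k : ℤ)) :
    consTimeInc G hdeg pk x0 ≤
      ((k - 1 : ℕ) : ENNReal) * ⨆ y0 : V → Bool, consTimePV G hdeg pk y0 :=
  consensus_time_le_k_times_pull_voting_time_general G hdeg pk k x0 hx0

end IncrementalVoting6
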